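/- arXiv:1404.6819 — 2 statements merged into one kernel-verified Lean document; each statement's English description precedes it below -/
import Mathlib

section
/- Suppose {A_1,…,A_k} is an irreducible family of pairwise commuting matrices in M_S([0,∞)) for a finite set S, and let x be the unique non-negative common eigenvector of the A_i with Σ_{s∈S} x_s = 1. Then x_s > 0 for every s ∈ S, and for each 1 ≤ i ≤ k one has A_i x = ρ(A_i) x and ρ(A_i) > 0. -/
noncomputable def specRad {S : Type*} [Fintype S] [DecidableEq S] (B : Matrix S S ℝ) : ℝ :=
  (spectralRadius ℂ (B.map Complex.ofReal)).toReal

def matPow {S : Type*} [Fintype S] [DecidableEq S] {k : ℕ}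
    (A : Fin k → Matrix S S ℝ) (n : Fin k → ℕ) : Matrix S S ℝ :=
  ((List.finRange k).map fun i => A i ^ n i).prod

def IsIrreducibleFamily {S : Type*} [Fintype S] [DecidableEq S] {k : ℕ}
    (A : Fin k → Matrix S S ℝ) : Prop :=
  (∀ i, A i ≠ 0) ∧
    ∃ F : Finset (Fin k → ℕ), ∀ v w : S, 0 < (∑ n ∈ F, matPow A n) v w

/-!
Every `A^n` has `x` as an eigenvector, hence so does the positive matrix `A_F`; a non-negative,
nonzero eigenvector of a positive matrix is positive. Once `x > 0`, the Collatz–Wielandt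
argument shows that no complex eigenvalue of `A_i` exceeds the eigenvalue `λ_i` of `x` in modulus,
so `ρ(A_i) = λ_i`, and `λ_i > 0` because `A_i ≠ 0` is non-negative.
-/

open Matrix Finset

theorem spectralRadius_eq_nnnorm_of_mem_of_forall_norm_le {𝕜 A : Type*} [NormedField 𝕜] [Ring A]
    [Algebra 𝕜 A] {a : A} {z : 𝕜} (hz : z ∈ spectrum 𝕜 a) (h : ∀ μ ∈ spectrum 𝕜 a, ‖μ‖ ≤ ‖z‖) :
    spectralRadius 𝕜 a = ‖z‖₊ :=
  le_antisymm (iSup₂_le fun μ hμ => ENNReal.coe_le_coe.mpr (h μ hμ)) (le_iSup₂ (α := ENNReal) z hz)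

section NonnegMatrix

variable {S : Type*} [Fintype S]

theorem Matrix.pow_mulVec_eq_smul [DecidableEq S] {B : Matrix S S ℝ} {x : S → ℝ} {c : ℝ}
    (h : B *ᵥ x = c • x) (m : ℕ) : (B ^ m) *ᵥ x = c ^ m • x := by
  induction m with
  | zero => simp
  | succ m ih => rw [pow_succ, ← mulVec_mulVec, h, mulVec_smul, ih, smul_smul, pow_succ']

theorem matPow_mulVec_eq_smul [DecidableEq S] {k : ℕ} {A : Fin k → Matrix S S ℝ} {x : S → ℝ}
    {lam : Fin k → ℝ} (h : ∀ i, A i *ᵥ x = lam i • x) (n : Fin k → ℕ) :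
    matPow A n *ᵥ x = (∏ i, lam i ^ n i) • x := by
  rw [matPow, Fin.prod_univ_def]
  induction List.finRange k with
  | nil => simp
  | cons i L ih =>
    simp only [List.map_cons, List.prod_cons, ← mulVec_mulVec, ih, mulVec_smul,
      pow_mulVec_eq_smul (h i), smul_smul, mul_comm]

theorem Matrix.mulVec_apply_nonneg {B : Matrix S S ℝ} (hB : ∀ v w, 0 ≤ B v w) {x : S → ℝ}
    (hx : ∀ s, 0 ≤ x s) (v : S) : 0 ≤ (B *ᵥ x) v :=
  sum_nonneg fun w _ => mul_nonneg (hB v w) (hx w)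

theorem Matrix.mulVec_apply_pos {B : Matrix S S ℝ} (hB : ∀ v w, 0 ≤ B v w) {x : S → ℝ}
    (hx : ∀ s, 0 ≤ x s) {v w : S} (hBvw : 0 < B v w) (hxw : 0 < x w) : 0 < (B *ᵥ x) v :=
  sum_pos' (fun u _ => mul_nonneg (hB v u) (hx u)) ⟨w, mem_univ w, mul_pos hBvw hxw⟩

theorem pos_of_mulVec_eq_smul_of_pos {B : Matrix S S ℝ} (hB : ∀ v w, 0 < B v w) {x : S → ℝ}
    {c : ℝ} (h : B *ᵥ x = c • x) (hx : ∀ s, 0 ≤ x s) {w : S} (hxw : 0 < x w) (s : S) :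
    0 < x s := by
  have hpos : 0 < c * x s := by
    simpa [h] using mulVec_apply_pos (fun v w => (hB v w).le) hx (hB s w) hxw
  exact (hx s).lt_of_ne fun hs => by simp [← hs] at hpos

theorem eigenvalue_nonneg_of_nonneg_eigenvector {B : Matrix S S ℝ} (hB : ∀ v w, 0 ≤ B v w)
    {x : S → ℝ} {lam : ℝ} (h : B *ᵥ x = lam • x) (hx : ∀ s, 0 ≤ x s) {s : S} (hxs : 0 < x s) :
    0 ≤ lam := by
  have := mulVec_apply_nonneg hB hx s
  rw [h, Pi.smul_apply, smul_eq_mul] at this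
  exact nonneg_of_mul_nonneg_left this hxs

theorem eigenvalue_pos_of_pos_eigenvector {B : Matrix S S ℝ} (hB : ∀ v w, 0 ≤ B v w) (hB0 : B ≠ 0)
    {x : S → ℝ} {lam : ℝ} (h : B *ᵥ x = lam • x) (hx : ∀ s, 0 < x s) : 0 < lam := by
  obtain ⟨v, w, hvw⟩ : ∃ v w, B v w ≠ 0 := by
    by_contra! hzero
    exact hB0 (ext hzero)
  have := mulVec_apply_pos hB (fun s => (hx s).le) ((hB v w).lt_of_ne' hvw) (hx w)
  rw [h, Pi.smul_apply, smul_eq_mul] at this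
  exact pos_of_mul_pos_left this (hx v).le

/-- Collatz–Wielandt: compare `g` with `t • x`, where `t` is the largest ratio `g s / x s`. -/
theorem le_of_smul_le_mulVec {B : Matrix S S ℝ} (hB : ∀ v w, 0 ≤ B v w) {x : S → ℝ}
    (hx : ∀ s, 0 < x s) {lam : ℝ} (h : B *ᵥ x = lam • x) {g : S → ℝ} (hg : ∀ s, 0 ≤ g s)
    (hg0 : g ≠ 0) {c : ℝ} (hc : ∀ s, c * g s ≤ (B *ᵥ g) s) : c ≤ lam := by
  obtain ⟨w, hw⟩ := Function.ne_iff.mp hg0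
  obtain ⟨s, -, hs⟩ := exists_max_image univ (fun s => g s / x s) ⟨w, mem_univ w⟩
  set t := g s / x s
  have hgt : ∀ u, g u ≤ t * x u := fun u => (div_le_iff₀ (hx u)).mp (hs u (mem_univ u))
  have hgs : g s = t * x s := (div_mul_cancel₀ _ (hx s).ne').symm
  have hgs_pos : 0 < g s := by
    have ht : 0 < t := pos_of_mul_pos_left (((hg w).lt_of_ne' hw).trans_le (hgt w)) (hx w).le
    rw [hgs]
    exact mul_pos ht (hx s)
  refine le_of_mul_le_mul_right ?_ hgs_pos
  calc c * g s ≤ (B *ᵥ g) s := hc s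
    _ ≤ (B *ᵥ (t • x)) s :=
        sum_le_sum fun u _ => mul_le_mul_of_nonneg_left (hgt u) (hB s u)
    _ = lam * g s := by rw [mulVec_smul, h, hgs]; simp only [Pi.smul_apply, smul_eq_mul]; ring

theorem map_ofReal_mulVec_eq_smul {B : Matrix S S ℝ} {x : S → ℝ} {lam : ℝ}
    (h : B *ᵥ x = lam • x) :
    B.map Complex.ofReal *ᵥ (fun s => (x s : ℂ)) = (lam : ℂ) • fun s => (x s : ℂ) := by
  ext s
  have := RingHom.map_mulVec Complex.ofRealHom B x s
  rw [h] at this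
  simp only [Pi.smul_apply, smul_eq_mul, map_mul, Complex.ofRealHom_eq_coe] at this
  exact this.symm

theorem norm_mulVec_map_ofReal_apply_le {B : Matrix S S ℝ} (hB : ∀ v w, 0 ≤ B v w) (y : S → ℂ)
    (s : S) : ‖(B.map Complex.ofReal *ᵥ y) s‖ ≤ (B *ᵥ fun w => ‖y w‖) s := by
  refine (norm_sum_le _ _).trans_eq (sum_congr rfl fun w _ => ?_)
  change ‖(B s w : ℂ) * y w‖ = B s w * ‖y w‖
  rw [norm_mul, Complex.norm_real, Real.norm_of_nonneg (hB s w)]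

variable [DecidableEq S]

theorem Matrix.exists_mulVec_eq_smul_of_mem_spectrum {K : Type*} [Field K] {M : Matrix S S K}
    {μ : K} (hμ : μ ∈ spectrum K M) : ∃ y ≠ 0, M *ᵥ y = μ • y := by
  rw [← spectrum_toLin', ← Module.End.hasEigenvalue_iff_mem_spectrum] at hμ
  obtain ⟨y, hy⟩ := hμ.exists_hasEigenvector
  exact ⟨y, hy.2, hy.apply_eq_smul⟩

theorem Matrix.mem_spectrum_of_mulVec_eq_smul {K : Type*} [Field K] {M : Matrix S S K} {μ : K}
    {y : S → K} (hy : y ≠ 0) (h : M *ᵥ y = μ • y) : μ ∈ spectrum K M := by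
  rw [← spectrum_toLin', ← Module.End.hasEigenvalue_iff_mem_spectrum]
  exact Module.End.hasEigenvalue_of_hasEigenvector ⟨Module.End.mem_eigenspace_iff.mpr h, hy⟩

theorem norm_le_of_mem_spectrum_of_pos_eigenvector {B : Matrix S S ℝ} (hB : ∀ v w, 0 ≤ B v w)
    {x : S → ℝ} (hx : ∀ s, 0 < x s) {lam : ℝ} (h : B *ᵥ x = lam • x) {μ : ℂ}
    (hμ : μ ∈ spectrum ℂ (B.map Complex.ofReal)) : ‖μ‖ ≤ lam := by
  obtain ⟨y, hy0, hy⟩ := exists_mulVec_eq_smul_of_mem_spectrum hμ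
  refine le_of_smul_le_mulVec hB hx h (fun s => norm_nonneg (y s))
    (fun h0 => hy0 (funext fun s => norm_eq_zero.mp (congrFun h0 s))) fun s => ?_
  calc ‖μ‖ * ‖y s‖ = ‖(B.map Complex.ofReal *ᵥ y) s‖ := by rw [hy, Pi.smul_apply, norm_smul]
    _ ≤ _ := norm_mulVec_map_ofReal_apply_le hB y s

theorem specRad_eq_of_pos_eigenvector [Nonempty S] {B : Matrix S S ℝ} (hB : ∀ v w, 0 ≤ B v w)
    {x : S → ℝ} (hx : ∀ s, 0 < x s) {lam : ℝ} (h : B *ᵥ x = lam • x) : specRad B = lam := by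
  have hlam : 0 ≤ lam :=
    eigenvalue_nonneg_of_nonneg_eigenvector hB h (fun s => (hx s).le) (hx (Classical.arbitrary S))
  have hmem : (lam : ℂ) ∈ spectrum ℂ (B.map Complex.ofReal) := by
    refine mem_spectrum_of_mulVec_eq_smul ?_ (map_ofReal_mulVec_eq_smul h)
    exact fun h0 => (hx (Classical.arbitrary S)).ne' (by simpa using congrFun h0 _)
  have hnorm : ‖(lam : ℂ)‖ = lam := by rw [Complex.norm_real, Real.norm_of_nonneg hlam]
  have hbound : ∀ μ ∈ spectrum ℂ (B.map Complex.ofReal), ‖μ‖ ≤ ‖(lam : ℂ)‖ := fun μ hμ =>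
    (norm_le_of_mem_spectrum_of_pos_eigenvector hB hx h hμ).trans_eq hnorm.symm
  rw [specRad, spectralRadius_eq_nnnorm_of_mem_of_forall_norm_le hmem hbound, ENNReal.coe_toReal,
    coe_nnnorm, hnorm]

end NonnegMatrix

theorem common_eigenvector_positive_general {S : Type*} [Fintype S] [DecidableEq S] {k : ℕ}
    (A : Fin k → Matrix S S ℝ)
    (hnn : ∀ i v w, 0 ≤ A i v w)
    (hirr : IsIrreducibleFamily A)
    (x : S → ℝ)
    (hx : (∀ s, 0 ≤ x s) ∧ (∑ s, x s = 1) ∧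
      ∀ i, ∃ lam : ℝ, (A i).mulVec x = lam • x) :
    (∀ s, 0 < x s) ∧ ∀ i, (A i).mulVec x = specRad (A i) • x ∧ 0 < specRad (A i) := by
  obtain ⟨hxnn, hxsum, hxeig⟩ := hx
  choose lam hlam using hxeig
  obtain ⟨hA0, F, hF⟩ := hirr
  obtain ⟨w, -, hxw⟩ : ∃ w ∈ univ, (0 : ℝ) < x w :=
    exists_lt_of_sum_lt (by simp [hxsum])
  have hAF : (∑ n ∈ F, matPow A n) *ᵥ x = (∑ n ∈ F, ∏ i, lam i ^ n i) • x := by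
    simp only [sum_mulVec, matPow_mulVec_eq_smul hlam, sum_smul]
  have hxpos : ∀ s, 0 < x s := pos_of_mulVec_eq_smul_of_pos hF hAF hxnn hxw
  have : Nonempty S := ⟨w⟩
  refine ⟨hxpos, fun i => ?_⟩
  rw [specRad_eq_of_pos_eigenvector (hnn i) hxpos (hlam i)]
  exact ⟨hlam i, eigenvalue_pos_of_pos_eigenvector (hnn i) (hA0 i) (hlam i) hxpos⟩

/-- The unique non-negative unimodular common eigenvector `x` of an irreducible family is
entrywise positive, and each `A_i x = ρ(A_i) x` with `ρ(A_i) > 0`. -/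
theorem common_eigenvector_positive {S : Type*} [Fintype S] [DecidableEq S] {k : ℕ}
    (A : Fin k → Matrix S S ℝ)
    (hnn : ∀ i v w, 0 ≤ A i v w)
    (hcomm : ∀ i j, A i * A j = A j * A i)
    (hirr : IsIrreducibleFamily A)
    (x : S → ℝ)
    (hx : (∀ s, 0 ≤ x s) ∧ (∑ s, x s = 1) ∧
      ∀ i, ∃ lam : ℝ, (A i).mulVec x = lam • x) :
    (∀ s, 0 < x s) ∧ ∀ i, (A i).mulVec x = specRad (A i) • x ∧ 0 < specRad (A i) :=
  common_eigenvector_positive_general A hnn hirr x hx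
end

section
/- Let Λ be a strongly connected finite k-graph and let m, n, p, q ∈ ℕ^k. If σ^m(x) = σ^n(x) for all x ∈ Λ^∞ and p − q = m − n (as elements of ℤ^k), then σ^p(x) = σ^q(x) for all x ∈ Λ^∞. -/
/-- A higher-rank graph (`k`-graph): a countable category with a degree functor
`d : Λ → ℕ^k` satisfying the unique factorisation property.  Morphisms are called
paths; the vertices are the paths of degree `0` (the identity morphisms).
`r` and `s` are the codomain (range) and domain (source) maps.  By convention
`Λ^{e_i} ≠ ∅` for each standard generator `e_i` of `ℕ^k`. -/
structure KGraph (k : ℕ) where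
  Path : Type
  countable : Countable Path
  d : Path → Fin k → ℕ
  r : Path → Path
  s : Path → Path
  d_r : ∀ lam, d (r lam) = 0
  d_s : ∀ lam, d (s lam) = 0
  r_vertex : ∀ v, d v = 0 → r v = v
  s_vertex : ∀ v, d v = 0 → s v = v
  comp : ∀ μ ν : Path, s μ = r ν → Path
  r_comp : ∀ μ ν h, r (comp μ ν h) = r μ
  s_comp : ∀ μ ν h, s (comp μ ν h) = s ν
  d_comp : ∀ μ ν h, d (comp μ ν h) = d μ + d ν
  id_comp : ∀ lam (h : s (r lam) = r lam), comp (r lam) lam h = lam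
  comp_id : ∀ lam (h : s lam = r (s lam)), comp lam (s lam) h = lam
  assoc : ∀ μ ν τ (h1 : s μ = r ν) (h2 : s ν = r τ)
      (h3 : s (comp μ ν h1) = r τ) (h4 : s μ = r (comp ν τ h2)),
      comp (comp μ ν h1) τ h3 = comp μ (comp ν τ h2) h4
  factor : ∀ (lam : Path) (m n : Fin k → ℕ), d lam = m + n →
      ∃! μν : Path × Path, ∃ h : s μν.1 = r μν.2,
        d μν.1 = m ∧ d μν.2 = n ∧ comp μν.1 μν.2 h = lam
  edge_nonempty : ∀ i : Fin k, ∃ lam, d lam = Pi.single i 1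

namespace KGraph

variable {k : ℕ}

/-- The vertices of a `k`-graph: the paths of degree `0`. -/
abbrev Vertex (Λ : KGraph k) : Type := {v : Λ.Path // Λ.d v = 0}

/-- A `k`-graph is finite if `Λ^n` is finite for every `n ∈ ℕ^k`. -/
def IsFinite (Λ : KGraph k) : Prop := ∀ n : Fin k → ℕ, {lam : Λ.Path | Λ.d lam = n}.Finite

/-- A `k`-graph is strongly connected if `vΛw ≠ ∅` for all vertices `v, w`. -/
def StronglyConnected (Λ : KGraph k) : Prop :=
  ∀ v w : Λ.Path, Λ.d v = 0 → Λ.d w = 0 → ∃ lam : Λ.Path, Λ.r lam = v ∧ Λ.s lam = w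

/-- `Λ^min(μ,ν) = {(α,β) : μα = νβ, d(μα) = d(μ) ∨ d(ν)}`. -/
def minSet (Λ : KGraph k) (μ ν : Λ.Path) : Set (Λ.Path × Λ.Path) :=
  {p | ∃ (h1 : Λ.s μ = Λ.r p.1) (h2 : Λ.s ν = Λ.r p.2),
      Λ.comp μ p.1 h1 = Λ.comp ν p.2 h2 ∧ Λ.d μ + Λ.d p.1 = Λ.d μ ⊔ Λ.d ν}

end KGraph

/-- An infinite path in a `k`-graph `Λ`: a degree-preserving functor `x : Ω_k → Λ`,
recorded by its values `x(m,n)` for `m ≤ n` in `ℕ^k`. -/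
structure InfinitePath {k : ℕ} (Λ : KGraph k) where
  toFun : ∀ m n : Fin k → ℕ, m ≤ n → Λ.Path
  d_eq : ∀ m n h, Λ.d (toFun m n h) = n - m
  src : ∀ m n h, Λ.s (toFun m n h) = toFun n n le_rfl
  rng : ∀ m n h, Λ.r (toFun m n h) = toFun m m le_rfl
  comp_eq : ∀ m n p (h1 : m ≤ n) (h2 : n ≤ p)
      (hc : Λ.s (toFun m n h1) = Λ.r (toFun n p h2)),
      Λ.comp (toFun m n h1) (toFun n p h2) hc = toFun m p (h1.trans h2)

namespace InfinitePath

variable {k : ℕ} {Λ : KGraph k}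

/-- The shift map `σ^n` on the infinite-path space, `σ^n(x)(p,q) = x(n+p, n+q)`. -/
def shift (x : InfinitePath Λ) (n : Fin k → ℕ) : InfinitePath Λ where
  toFun p q h := x.toFun (n + p) (n + q) (add_le_add le_rfl h)
  d_eq p q h := by
    rw [x.d_eq]
    funext i
    exact Nat.add_sub_add_left (n i) (q i) (p i)
  src p q h := x.src _ _ _
  rng p q h := x.rng _ _ _
  comp_eq p q t h1 h2 hc := x.comp_eq _ _ _ _ _ hc

/-- The range `r(x) = x(0,0)` of an infinite path. -/
def range (x : InfinitePath Λ) : Λ.Path := x.toFun 0 0 le_rfl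

end InfinitePath

/-- `ExtEq Λ lam y x` says that `y = lam · x`, i.e. `y(0, d(lam)) = lam` and
`σ^{d(lam)}(y) = x`.  (Such an extension is unique when it exists.) -/
def KGraph.ExtEq {k : ℕ} (Λ : KGraph k) (lam : Λ.Path) (y x : InfinitePath Λ) : Prop :=
  y.toFun 0 (Λ.d lam) zero_le = lam ∧ y.shift (Λ.d lam) = x

/-- `Λ.IsTheta m n μ ν` says that `μ ∈ Λ^m`, `ν ∈ Λ^n`, and `μx = νx` for every
infinite path `x ∈ Z(s(μ))`; i.e. `ν = θ_{m,n}(μ)`. -/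
def KGraph.IsTheta {k : ℕ} (Λ : KGraph k) (m n : Fin k → ℕ) (μ ν : Λ.Path) : Prop :=
  Λ.d μ = m ∧ Λ.d ν = n ∧
    ∀ x : InfinitePath Λ, x.range = Λ.s μ →
      ∃ y : InfinitePath Λ, Λ.ExtEq μ y x ∧ Λ.ExtEq ν y x

/-- The periodicity group `Per Λ = {m − n : σ^m(x) = σ^n(x) for all x ∈ Λ^∞} ⊆ ℤ^k`. -/
def KGraph.Per {k : ℕ} (Λ : KGraph k) : Set (Fin k → ℤ) :=
  {g | ∃ m n : Fin k → ℕ, (∀ i, (m i : ℤ) - n i = g i) ∧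
      ∀ x : InfinitePath Λ, x.shift m = x.shift n}

/-- `Λ` is aperiodic if every vertex `v` admits `x ∈ Z(v)` with
`σ^m(x) ≠ σ^n(x)` for all `m ≠ n` in `ℕ^k`. -/
def KGraph.Aperiodic {k : ℕ} (Λ : KGraph k) : Prop :=
  ∀ v : Λ.Path, Λ.d v = 0 → ∃ x : InfinitePath Λ, x.range = v ∧
    ∀ m n : Fin k → ℕ, m ≠ n → x.shift m ≠ x.shift n

/-!
Strong connectivity gives paths of every degree into every vertex, so every infinite path `x`
has the form `σ^m(y)` with `y = λx` for some `λ ∈ Λ^m`. Since `p + n = m + q`, this gives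
`σ^p(x) = σ^{p+m}(y) = σ^m(σ^p(y)) = σ^n(σ^p(y)) = σ^{m+q}(y) = σ^q(x)`.
The work lies in constructing `λx`: its segment `(λx)(a, b)` is read off the finite path
`λ · x(0, b)`, and unique factorisation makes these segments fit together.
-/

namespace KGraph

variable {k : ℕ} {Λ : KGraph k}

lemma comp_congr {μ μ' ν ν' : Λ.Path} (hμ : μ = μ') (hν : ν = ν') {h : Λ.s μ = Λ.r ν}
    {h' : Λ.s μ' = Λ.r ν'} : Λ.comp μ ν h = Λ.comp μ' ν' h' := by
  subst hμ hν
  rfl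

lemma comp_assoc (μ ν τ : Λ.Path) (hμν : Λ.s μ = Λ.r ν) (hντ : Λ.s ν = Λ.r τ) :
    Λ.comp (Λ.comp μ ν hμν) τ (by rw [Λ.s_comp]; exact hντ) =
      Λ.comp μ (Λ.comp ν τ hντ) (by rw [Λ.r_comp]; exact hμν) :=
  Λ.assoc μ ν τ hμν hντ _ _

lemma vertex_comp {v μ : Λ.Path} (hv : Λ.d v = 0) (h : Λ.s v = Λ.r μ) :
    Λ.comp v μ h = μ := by
  obtain rfl : v = Λ.r μ := (Λ.s_vertex v hv).symm.trans h
  exact Λ.id_comp μ h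

lemma eq_and_eq_of_comp_eq_comp {μ ν μ' ν' : Λ.Path} {h : Λ.s μ = Λ.r ν}
    {h' : Λ.s μ' = Λ.r ν'} (he : Λ.comp μ ν h = Λ.comp μ' ν' h') (hd : Λ.d μ = Λ.d μ') :
    μ = μ' ∧ ν = ν' := by
  have hdν : Λ.d ν' = Λ.d ν := by
    apply add_left_cancel (a := Λ.d μ)
    rw [hd, ← Λ.d_comp μ' ν' h', ← he, Λ.d_comp, hd]
  exact Prod.ext_iff.mp <| (Λ.factor _ _ _ (Λ.d_comp μ ν h)).unique (y₁ := (μ, ν)) (y₂ := (μ', ν'))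
    ⟨h, rfl, rfl, rfl⟩ ⟨h', hd.symm, hdν, he.symm⟩

/-- `IsSegment L a b μ` says `μ = L(a, b)`, for `L` viewed as a functor on
`{(a, b) : a ≤ b ≤ d(L)}`. -/
def IsSegment (Λ : KGraph k) (L : Λ.Path) (a b : Fin k → ℕ) (μ : Λ.Path) : Prop :=
  a + Λ.d μ = b ∧ ∃ (α β : Λ.Path) (hμβ : Λ.s μ = Λ.r β) (hα : Λ.s α = Λ.r (Λ.comp μ β hμβ)),
    Λ.d α = a ∧ Λ.comp α (Λ.comp μ β hμβ) hα = L

lemma isSegment_comp_comp (α μ β : Λ.Path) (hμβ : Λ.s μ = Λ.r β)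
    (hα : Λ.s α = Λ.r (Λ.comp μ β hμβ)) :
    Λ.IsSegment (Λ.comp α (Λ.comp μ β hμβ) hα) (Λ.d α) (Λ.d α + Λ.d μ) μ :=
  ⟨rfl, α, β, hμβ, hα, rfl, rfl⟩

lemma exists_isSegment (L : Λ.Path) {a b : Fin k → ℕ} (hab : a ≤ b) (hb : b ≤ Λ.d L) :
    ∃ μ, Λ.IsSegment L a b μ := by
  have ha : Λ.d L = a + (Λ.d L - a) := (add_tsub_cancel_of_le (hab.trans hb)).symm
  obtain ⟨⟨α, τ⟩, ⟨hατ, hα, hτ, rfl⟩, -⟩ := Λ.factor L a (Λ.d L - a) ha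
  have hb' : Λ.d τ = (b - a) + (Λ.d (Λ.comp α τ hατ) - b) := by
    rw [hτ, add_comm]
    exact (tsub_add_tsub_cancel hb hab).symm
  obtain ⟨⟨μ, β⟩, ⟨hμβ, hμ, -, rfl⟩, -⟩ := Λ.factor τ _ _ hb'
  exact ⟨μ, by rw [hμ, add_tsub_cancel_of_le hab], α, β, hμβ, hατ, hα, rfl⟩

noncomputable def segment (L : Λ.Path) {a b : Fin k → ℕ} (hab : a ≤ b) (hb : b ≤ Λ.d L) :
    Λ.Path :=
  (exists_isSegment L hab hb).choose

lemma isSegment_segment (L : Λ.Path) {a b : Fin k → ℕ} (hab : a ≤ b) (hb : b ≤ Λ.d L) :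
    Λ.IsSegment L a b (segment L hab hb) :=
  (exists_isSegment L hab hb).choose_spec

namespace IsSegment

variable {L M μ ν : Λ.Path} {a b c : Fin k → ℕ}

lemma unique (hμ : Λ.IsSegment L a b μ) (hν : Λ.IsSegment L a b ν) : μ = ν := by
  obtain ⟨hdμ, α, β, hμβ, hα, hdα, rfl⟩ := hμ
  obtain ⟨hdν, α', β', _, _, hdα', hL⟩ := hν
  have hτ := (eq_and_eq_of_comp_eq_comp hL.symm (hdα.trans hdα'.symm)).2
  exact (eq_and_eq_of_comp_eq_comp hτ (add_left_cancel (hdμ.trans hdν.symm))).1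

lemma comp_right (h : Λ.IsSegment L a b μ) (M : Λ.Path) (hLM : Λ.s L = Λ.r M) :
    Λ.IsSegment (Λ.comp L M hLM) a b μ := by
  obtain ⟨hd, α, β, hμβ, hα, hdα, rfl⟩ := h
  have hβM : Λ.s β = Λ.r M := by rwa [Λ.s_comp, Λ.s_comp] at hLM
  have hμβM : Λ.s (Λ.comp μ β hμβ) = Λ.r M := by rwa [Λ.s_comp]
  refine ⟨hd, α, Λ.comp β M hβM, by rwa [Λ.r_comp],
    by rw [Λ.r_comp]; rwa [Λ.r_comp] at hα, hdα, ?_⟩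
  exact ((Λ.comp_assoc α _ M hα hμβM).trans
    (comp_congr rfl (Λ.comp_assoc μ β M hμβ hβM))).symm

lemma comp_left (h : Λ.IsSegment M a b μ) (L : Λ.Path) (hLM : Λ.s L = Λ.r M) :
    Λ.IsSegment (Λ.comp L M hLM) (Λ.d L + a) (Λ.d L + b) μ := by
  obtain ⟨hd, α, β, hμβ, hα, hdα, rfl⟩ := h
  have hLα : Λ.s L = Λ.r α := by rwa [Λ.r_comp] at hLM
  refine ⟨by rw [add_assoc, hd], Λ.comp L α hLα, β, hμβ, by rwa [Λ.s_comp],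
    by rw [Λ.d_comp, hdα], ?_⟩
  exact Λ.comp_assoc L α _ hLα hα

lemma isSegment_r (h : Λ.IsSegment L a b μ) : Λ.IsSegment L a a (Λ.r μ) := by
  obtain ⟨-, α, β, hμβ, hα, hdα, rfl⟩ := h
  have hr : Λ.s (Λ.r μ) = Λ.r (Λ.comp μ β hμβ) := by rw [Λ.s_vertex _ (Λ.d_r μ), Λ.r_comp]
  have he : Λ.comp (Λ.r μ) (Λ.comp μ β hμβ) hr = Λ.comp μ β hμβ := vertex_comp (Λ.d_r μ) hr
  exact ⟨by rw [Λ.d_r, add_zero], α, _, hr, by rwa [he], hdα, comp_congr rfl he⟩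

lemma isSegment_s (h : Λ.IsSegment L a b μ) : Λ.IsSegment L b b (Λ.s μ) := by
  obtain ⟨hd, α, β, hμβ, hα, hdα, rfl⟩ := h
  have hαμ : Λ.s α = Λ.r μ := by rwa [Λ.r_comp] at hα
  have hs : Λ.s (Λ.s μ) = Λ.r β := by rwa [Λ.s_vertex _ (Λ.d_s μ)]
  have he : Λ.comp (Λ.s μ) β hs = β := vertex_comp (Λ.d_s μ) hs
  refine ⟨by rw [Λ.d_s, add_zero], Λ.comp α μ hαμ, β, hs, by rwa [he, Λ.s_comp],
    by rw [Λ.d_comp, hdα, hd], ?_⟩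
  exact (comp_congr rfl he).trans (Λ.comp_assoc α μ β hαμ hμβ)

lemma comp (h₁ : Λ.IsSegment L a b μ) (h₂ : Λ.IsSegment L b c ν) (hμν : Λ.s μ = Λ.r ν) :
    Λ.IsSegment L a c (Λ.comp μ ν hμν) := by
  obtain ⟨hd₁, α, β, hμβ, hα, hdα, hL⟩ := h₁
  have ⟨hd₂, α₂, β₂, _, _, hdα₂, hL₂⟩ := h₂
  have hdβ : Λ.d β = Λ.d ν + Λ.d β₂ := by
    have e := congrArg Λ.d (hL₂.trans hL.symm)
    simp only [Λ.d_comp, hdα₂, hdα, ← add_assoc, hd₁] at e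
    rw [add_assoc] at e
    exact (add_left_cancel e).symm
  obtain ⟨⟨ν', β'⟩, ⟨hν'β', hdν', -, hβ⟩, -⟩ := Λ.factor β _ _ hdβ
  dsimp only at hν'β' hdν' hβ
  subst hβ
  have hαμ : Λ.s α = Λ.r μ := by rwa [Λ.r_comp] at hα
  have hμν' : Λ.s μ = Λ.r ν' := by rwa [Λ.r_comp] at hμβ
  have hν' : Λ.IsSegment L b c ν' := by
    have := isSegment_comp_comp (Λ.comp α μ hαμ) ν' β' hν'β' (by rwa [Λ.s_comp])
    rwa [Λ.comp_assoc α μ _ hαμ hμβ, hL, Λ.d_comp, hdα, hd₁, hdν', hd₂] at this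
  obtain rfl : ν' = ν := hν'.unique h₂
  have := isSegment_comp_comp α (Λ.comp μ ν' hμν') β' (by rwa [Λ.s_comp])
    (by rw [Λ.r_comp, Λ.r_comp]; exact hαμ)
  rwa [comp_congr rfl (Λ.comp_assoc μ ν' β' hμν' hν'β') (h' := hα), hL, Λ.d_comp, hdα,
    ← add_assoc, hd₁, hd₂] at this

end IsSegment

def NoSinks (Λ : KGraph k) : Prop :=
  ∀ v : Λ.Path, Λ.d v = 0 → ∀ t : Fin k → ℕ, ∃ lam : Λ.Path, Λ.d lam = t ∧ Λ.s lam = v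

lemma StronglyConnected.exists_edge (hsc : Λ.StronglyConnected) {v : Λ.Path} (hv : Λ.d v = 0)
    (i : Fin k) : ∃ e, Λ.d e = Pi.single i 1 ∧ Λ.s e = v := by
  obtain ⟨f, hf⟩ := Λ.edge_nonempty i
  obtain ⟨μ, hrμ, hsμ⟩ := hsc (Λ.s f) v (Λ.d_s f) hv
  have hd : Λ.d (Λ.comp f μ hrμ.symm) = Λ.d μ + Pi.single i 1 := by
    rw [Λ.d_comp, hf, add_comm]
  obtain ⟨⟨_, e⟩, ⟨_, -, hde, he⟩, -⟩ := Λ.factor _ _ _ hd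
  refine ⟨e, hde, ?_⟩
  have := congrArg Λ.s he
  rwa [Λ.s_comp, Λ.s_comp, hsμ] at this

lemma StronglyConnected.noSinks (hsc : Λ.StronglyConnected) : Λ.NoSinks := by
  let P (t : Fin k → ℕ) : Prop := ∀ v : Λ.Path, Λ.d v = 0 → ∃ lam, Λ.d lam = t ∧ Λ.s lam = v
  have zero : P 0 := fun v hv => ⟨v, hv, Λ.s_vertex v hv⟩
  have add (t₁ t₂ : Fin k → ℕ) (h₁ : P t₁) (h₂ : P t₂) : P (t₁ + t₂) := by
    intro v hv
    obtain ⟨lam₂, hd₂, hs₂⟩ := h₂ v hv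
    obtain ⟨lam₁, hd₁, hs₁⟩ := h₁ (Λ.r lam₂) (Λ.d_r lam₂)
    exact ⟨Λ.comp lam₁ lam₂ hs₁, by rw [Λ.d_comp, hd₁, hd₂], by rw [Λ.s_comp, hs₂]⟩
  have single (i : Fin k) (m : ℕ) : P (Pi.single i m) := by
    induction m with
    | zero => rwa [Pi.single_zero]
    | succ m ih => rw [Pi.single_add]; exact add _ _ ih fun v hv => hsc.exists_edge hv i
  exact fun v hv t => Pi.single_induction P t zero add single v hv

end KGraph

namespace InfinitePath

variable {k : ℕ} {Λ : KGraph k}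

lemma ext {x y : InfinitePath Λ}
    (h : ∀ a b (hab : a ≤ b), x.toFun a b hab = y.toFun a b hab) : x = y := by
  cases x
  cases y
  congr
  funext a b hab
  exact h a b hab

lemma toFun_congr (x : InfinitePath Λ) {a a' b b' : Fin k → ℕ} (ha : a = a') (hb : b = b')
    (h : a ≤ b) (h' : a' ≤ b') : x.toFun a b h = x.toFun a' b' h' := by
  subst ha hb
  rfl

lemma shift_shift (x : InfinitePath Λ) (a b : Fin k → ℕ) :
    (x.shift a).shift b = x.shift (a + b) :=
  ext fun p q _ => x.toFun_congr (add_assoc a b p).symm (add_assoc a b q).symm _ _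

lemma d_range (x : InfinitePath Λ) : Λ.d x.range = 0 := by
  rw [range, x.d_eq, tsub_self]

lemma isSegment_toFun (x : InfinitePath Λ) {a b c : Fin k → ℕ} (hab : a ≤ b) (hbc : b ≤ c) :
    Λ.IsSegment (x.toFun 0 c zero_le) a b (x.toFun a b hab) := by
  have hbc' : Λ.s (x.toFun a b hab) = Λ.r (x.toFun b c hbc) := by rw [x.src, x.rng]
  have h0a : Λ.s (x.toFun 0 a zero_le) = Λ.r (x.toFun a c (hab.trans hbc)) := by
    rw [x.src, x.rng]
  have := KGraph.isSegment_comp_comp (x.toFun 0 a zero_le) _ _ hbc'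
    (by rw [Λ.r_comp, x.src, x.rng])
  rwa [KGraph.comp_congr rfl (x.comp_eq a b c hab hbc hbc') (h' := h0a), x.comp_eq, x.d_eq,
    x.d_eq, tsub_zero, add_tsub_cancel_of_le hab] at this

section Extend

variable (x : InfinitePath Λ) (lam : Λ.Path) (hlam : Λ.s lam = x.range)

def prependSeg (c : Fin k → ℕ) : Λ.Path :=
  Λ.comp lam (x.toFun 0 c zero_le) (by rw [x.rng]; exact hlam)

lemma d_prependSeg (c : Fin k → ℕ) : Λ.d (x.prependSeg lam hlam c) = Λ.d lam + c := by
  rw [prependSeg, Λ.d_comp, x.d_eq, tsub_zero]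

lemma prependSeg_eq_comp {c c' : Fin k → ℕ} (hcc' : c ≤ c') :
    x.prependSeg lam hlam c' = Λ.comp (x.prependSeg lam hlam c) (x.toFun c c' hcc')
      (by rw [prependSeg, Λ.s_comp, x.src, x.rng]) :=
  ((Λ.comp_assoc lam _ _ _ (by rw [x.src, x.rng])).trans
    (KGraph.comp_congr rfl (x.comp_eq _ _ _ _ _ _))).symm

noncomputable def extendFun (a b : Fin k → ℕ) (hab : a ≤ b) : Λ.Path :=
  Λ.segment (x.prependSeg lam hlam b) hab (by rw [d_prependSeg]; exact le_add_self)

lemma isSegment_extendFun {a b c : Fin k → ℕ} (hab : a ≤ b) (hbc : b ≤ c) :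
    Λ.IsSegment (x.prependSeg lam hlam c) a b (x.extendFun lam hlam a b hab) := by
  rw [prependSeg_eq_comp x lam hlam hbc]
  exact (KGraph.isSegment_segment _ _ _).comp_right _ _

/-- The infinite path `λx`. -/
noncomputable def extend : InfinitePath Λ where
  toFun := x.extendFun lam hlam
  d_eq _ _ h :=
    eq_tsub_of_add_eq ((add_comm _ _).trans (x.isSegment_extendFun lam hlam h le_rfl).1)
  src _ _ h := (x.isSegment_extendFun lam hlam h le_rfl).isSegment_s.unique
    (x.isSegment_extendFun lam hlam le_rfl le_rfl)
  rng _ _ h := (x.isSegment_extendFun lam hlam h le_rfl).isSegment_r.unique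
    (x.isSegment_extendFun lam hlam le_rfl h)
  comp_eq _ _ _ h₁ h₂ hc := ((x.isSegment_extendFun lam hlam h₁ h₂).comp
    (x.isSegment_extendFun lam hlam h₂ le_rfl) hc).unique
    (x.isSegment_extendFun lam hlam (h₁.trans h₂) le_rfl)

lemma extend_shift : (x.extend lam hlam).shift (Λ.d lam) = x :=
  ext fun _ _ hab => (x.isSegment_extendFun lam hlam (add_le_add le_rfl hab) le_rfl).unique
    ((x.isSegment_toFun hab le_add_self).comp_left lam _)

end Extend

end InfinitePath

lemma KGraph.NoSinks.exists_shift_eq {k : ℕ} {Λ : KGraph k} (h : Λ.NoSinks)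
    (x : InfinitePath Λ) (t : Fin k → ℕ) : ∃ y : InfinitePath Λ, y.shift t = x := by
  obtain ⟨lam, rfl, hlam⟩ := h x.range x.d_range t
  exact ⟨x.extend lam hlam, x.extend_shift lam hlam⟩

theorem periodicity_depends_on_difference_general {k : ℕ} (Λ : KGraph k)
    (hsc : Λ.StronglyConnected)
    (m n p q : Fin k → ℕ)
    (h : ∀ x : InfinitePath Λ, x.shift m = x.shift n)
    (hpq : ∀ i, (p i : ℤ) - q i = (m i : ℤ) - n i) :
    ∀ x : InfinitePath Λ, x.shift p = x.shift q := by
  intro x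
  obtain ⟨y, rfl⟩ := hsc.noSinks.exists_shift_eq x m
  have hpn : p + n = m + q := funext fun i => by have := hpq i; simp only [Pi.add_apply]; omega
  calc (y.shift m).shift p = (y.shift p).shift m := by
        rw [InfinitePath.shift_shift, InfinitePath.shift_shift, add_comm]
    _ = (y.shift p).shift n := h _
    _ = (y.shift m).shift q := by
        rw [InfinitePath.shift_shift, InfinitePath.shift_shift, hpn]

/-- If `σ^m(x) = σ^n(x)` for all infinite paths `x` and `p − q = m − n` in `ℤ^k`, then
`σ^p(x) = σ^q(x)` for all infinite paths `x`. -/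
theorem periodicity_depends_on_difference {k : ℕ} (Λ : KGraph k)
    (hfin : Λ.IsFinite) (hsc : Λ.StronglyConnected)
    (m n p q : Fin k → ℕ)
    (h : ∀ x : InfinitePath Λ, x.shift m = x.shift n)
    (hpq : ∀ i, (p i : ℤ) - q i = (m i : ℤ) - n i) :
    ∀ x : InfinitePath Λ, x.shift p = x.shift q :=
  periodicity_depends_on_difference_general Λ hsc m n p q h hpq
end
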